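/- Let m, b_1, b_2 : ℝ³ → ℝ be smooth functions of (x, y, t) satisfying m_y = (m b_1)_x + m b_{1,x}; (1/2)(b_{1,xxx} − b_{1,x}) = −(1/2) m_x; m_t = (m b_2)_x + m b_{2,x}; and (1/2)(b_{2,xxx} − b_{2,x}) = (m b_1)_x + m b_{1,x} (so that m solves the (2+1)-dimensional CH equation). Then for every real λ ≠ 0 the Lax triad compatibility conditions hold pointwise on ℝ³: U_y − (V¹)_x + U V¹ − V¹ U = 0 and U_t − (V²)_x + U V² − V² U = 0, where V¹ = −(1/2) U + Ṽ[b_1] and V² = −(1/2) U + Ṽ[b_2] + λ^{−1} Ṽ[b_1]. -/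

import Mathlib

open Matrix Finset

/-- Partial derivative in the first (x) variable. -/
noncomputable def dX3 (f : ℝ → ℝ → ℝ → ℝ) : ℝ → ℝ → ℝ → ℝ :=
  fun x y t => deriv (fun x' => f x' y t) x

/-- Partial derivative in the second (y) variable. -/
noncomputable def dY3 (f : ℝ → ℝ → ℝ → ℝ) : ℝ → ℝ → ℝ → ℝ :=
  fun x y t => deriv (fun y' => f x y' t) y

/-- Partial derivative in the third (t) variable. -/
noncomputable def dT3 (f : ℝ → ℝ → ℝ → ℝ) : ℝ → ℝ → ℝ → ℝ :=
  fun x y t => deriv (fun t' => f x y t') t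

/-- Smoothness of a function of three real variables. -/
def Smooth3 (f : ℝ → ℝ → ℝ → ℝ) : Prop :=
  ContDiff ℝ (⊤ : ℕ∞) (fun p : ℝ × ℝ × ℝ => f p.1 p.2.1 p.2.2)

/-- Entrywise partial derivative in x of a matrix-valued function on ℝ³. -/
noncomputable def mdX3 (M : ℝ → ℝ → ℝ → Matrix (Fin 2) (Fin 2) ℝ) :
    ℝ → ℝ → ℝ → Matrix (Fin 2) (Fin 2) ℝ :=
  fun x y t => Matrix.of fun i j => deriv (fun x' => M x' y t i j) x

/-- Entrywise partial derivative in y of a matrix-valued function on ℝ³. -/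
noncomputable def mdY3 (M : ℝ → ℝ → ℝ → Matrix (Fin 2) (Fin 2) ℝ) :
    ℝ → ℝ → ℝ → Matrix (Fin 2) (Fin 2) ℝ :=
  fun x y t => Matrix.of fun i j => deriv (fun y' => M x y' t i j) y

/-- Entrywise partial derivative in t of a matrix-valued function on ℝ³. -/
noncomputable def mdT3 (M : ℝ → ℝ → ℝ → Matrix (Fin 2) (Fin 2) ℝ) :
    ℝ → ℝ → ℝ → Matrix (Fin 2) (Fin 2) ℝ :=
  fun x y t => Matrix.of fun i j => deriv (fun t' => M x y t' i j) t

/-- The CH spatial Lax matrix U(λ) = [[0, 1], [1/4 + λ m, 0]] (on ℝ³). -/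
noncomputable def CHU3 (lam : ℝ) (m : ℝ → ℝ → ℝ → ℝ) : ℝ → ℝ → ℝ → Matrix (Fin 2) (Fin 2) ℝ :=
  fun x y t => !![0, 1; 1/4 + lam * m x y t, 0]

/-- The matrix Ṽ[b](λ) of the CH hierarchy (on ℝ³). -/
noncomputable def CHVt3 (lam : ℝ) (m b : ℝ → ℝ → ℝ → ℝ) : ℝ → ℝ → ℝ → Matrix (Fin 2) (Fin 2) ℝ :=
  fun x y t =>
    !![-(1/2) * dX3 b x y t, b x y t + 1/2 - 1/(2*lam);
       lam * m x y t * (b x y t + 1/2) - (1/2) * dX3 (dX3 b) x y t + (1/4) * (b x y t + 1/2)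
         - (1/2) * m x y t - 1/(8*lam),
       (1/2) * dX3 b x y t]

private lemma sliceX_smooth {f : ℝ → ℝ → ℝ → ℝ} (hf : Smooth3 f) (y t : ℝ) :
    ContDiff ℝ (⊤ : ℕ∞) (fun x => f x y t) := by
  have h' : ContDiff ℝ (⊤ : ℕ∞) (fun p : ℝ × ℝ × ℝ => f p.1 p.2.1 p.2.2) := hf.of_le (by simp)
  exact h'.comp (contDiff_id.prodMk (contDiff_const (c := (y, t))))

private lemma sliceY_smooth {f : ℝ → ℝ → ℝ → ℝ} (hf : Smooth3 f) (x t : ℝ) :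
    ContDiff ℝ (⊤ : ℕ∞) (fun y => f x y t) := by
  have h' : ContDiff ℝ (⊤ : ℕ∞) (fun p : ℝ × ℝ × ℝ => f p.1 p.2.1 p.2.2) := hf.of_le (by simp)
  exact h'.comp ((contDiff_const (c := x)).prodMk (contDiff_id.prodMk (contDiff_const (c := t))))

private lemma sliceT_smooth {f : ℝ → ℝ → ℝ → ℝ} (hf : Smooth3 f) (x y : ℝ) :
    ContDiff ℝ (⊤ : ℕ∞) (fun t => f x y t) := by
  have h' : ContDiff ℝ (⊤ : ℕ∞) (fun p : ℝ × ℝ × ℝ => f p.1 p.2.1 p.2.2) := hf.of_le (by simp)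
  exact h'.comp ((contDiff_const (c := x)).prodMk ((contDiff_const (c := y)).prodMk contDiff_id))

private lemma smooth_deriv {f : ℝ → ℝ} (hf : ContDiff ℝ (⊤ : ℕ∞) f) :
    ContDiff ℝ (⊤ : ℕ∞) (deriv f) := (contDiff_infty_iff_deriv.mp hf).2

private lemma smooth_hasDerivAt {f : ℝ → ℝ} (hf : ContDiff ℝ (⊤ : ℕ∞) f) (x : ℝ) :
    HasDerivAt f (deriv f x) x := (hf.differentiable (by simp) x).hasDerivAt

/-- the (2+1)-dimensional CH equation possesses the Lax triad
U, V¹ = −(1/2)U + Ṽ[b₁], V² = −(1/2)U + Ṽ[b₂] + λ⁻¹ Ṽ[b₁]. -/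
theorem twoDCH_Lax_triad
    (m b1 b2 : ℝ → ℝ → ℝ → ℝ)
    (hm : Smooth3 m) (hb1 : Smooth3 b1) (hb2 : Smooth3 b2)
    (hy : ∀ x y t, dY3 m x y t
        = dX3 (fun x y t => m x y t * b1 x y t) x y t + m x y t * dX3 b1 x y t)
    (h1 : ∀ x y t, (1/2) * (dX3 (dX3 (dX3 b1)) x y t - dX3 b1 x y t)
        = -(1/2) * dX3 m x y t)
    (ht : ∀ x y t, dT3 m x y t
        = dX3 (fun x y t => m x y t * b2 x y t) x y t + m x y t * dX3 b2 x y t)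
    (h2 : ∀ x y t, (1/2) * (dX3 (dX3 (dX3 b2)) x y t - dX3 b2 x y t)
        = dX3 (fun x y t => m x y t * b1 x y t) x y t + m x y t * dX3 b1 x y t)
    (lam : ℝ) (hlam : lam ≠ 0) :
    (∀ x y t,
      mdY3 (CHU3 lam m) x y t
        - mdX3 (fun x y t => (-(1/2) : ℝ) • CHU3 lam m x y t + CHVt3 lam m b1 x y t) x y t
        + CHU3 lam m x y t * ((-(1/2) : ℝ) • CHU3 lam m x y t + CHVt3 lam m b1 x y t)
        - ((-(1/2) : ℝ) • CHU3 lam m x y t + CHVt3 lam m b1 x y t) * CHU3 lam m x y t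
      = 0)
    ∧ (∀ x y t,
      mdT3 (CHU3 lam m) x y t
        - mdX3 (fun x y t => (-(1/2) : ℝ) • CHU3 lam m x y t + CHVt3 lam m b2 x y t
            + lam⁻¹ • CHVt3 lam m b1 x y t) x y t
        + CHU3 lam m x y t * ((-(1/2) : ℝ) • CHU3 lam m x y t + CHVt3 lam m b2 x y t
            + lam⁻¹ • CHVt3 lam m b1 x y t)
        - ((-(1/2) : ℝ) • CHU3 lam m x y t + CHVt3 lam m b2 x y t
            + lam⁻¹ • CHVt3 lam m b1 x y t) * CHU3 lam m x y t
      = 0) := by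
  constructor
  · intro x y t
    have hBc : ContDiff ℝ (⊤:ℕ∞) (fun x' => b1 x' y t) := sliceX_smooth hb1 y t
    have hB'c := smooth_deriv hBc
    have hB''c := smooth_deriv hB'c
    have hMc : ContDiff ℝ (⊤:ℕ∞) (fun x' => m x' y t) := sliceX_smooth hm y t
    have hMyc : ContDiff ℝ (⊤:ℕ∞) (fun y' => m x y' t) := sliceY_smooth hm x t
    have hb1d : HasDerivAt (fun x' => b1 x' y t) (deriv (fun x' => b1 x' y t) x) x :=
      smooth_hasDerivAt hBc x
    have hb2d : HasDerivAt (fun x' => deriv (fun x' => b1 x' y t) x')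
        (deriv (fun x' => deriv (fun x' => b1 x' y t) x') x) x := smooth_hasDerivAt hB'c x
    have hb3d : HasDerivAt (fun x' => deriv (fun x' => deriv (fun x' => b1 x' y t) x') x')
        (deriv (fun x' => deriv (fun x' => deriv (fun x' => b1 x' y t) x') x') x) x :=
      smooth_hasDerivAt hB''c x
    have hmd : HasDerivAt (fun x' => m x' y t) (deriv (fun x' => m x' y t) x) x :=
      smooth_hasDerivAt hMc x
    have hmyd : HasDerivAt (fun y' => m x y' t) (deriv (fun y' => m x y' t) y) y :=
      smooth_hasDerivAt hMyc y
    have hy' := hy x y t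
    have h1' := h1 x y t
    simp only [dX3, dY3] at hy' h1'
    have hprod : deriv (fun x' => m x' y t * b1 x' y t) x
        = deriv (fun x' => m x' y t) x * b1 x y t + m x y t * deriv (fun x' => b1 x' y t) x :=
      (hmd.mul hb1d).deriv
    rw [hprod] at hy'
    have E00 : HasDerivAt (fun x' => -(1 / 2) * 0 + -(1 / 2) * deriv (fun x' => b1 x' y t) x')
        ((0:ℝ) + -(1/2) * deriv (fun x' => deriv (fun x' => b1 x' y t) x') x) x :=
      (hasDerivAt_const x (-(1/2)*(0:ℝ))).add (hb2d.const_mul (-(1/2)))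
    have E01 : HasDerivAt (fun x' => -(1 / 2) * 1 + (b1 x' y t + 1 / 2 - 1 / (2 * lam)))
        ((0:ℝ) + deriv (fun x' => b1 x' y t) x) x :=
      (hasDerivAt_const x (-(1/2)*(1:ℝ))).add ((hb1d.add_const (1/2)).sub_const (1/(2*lam)))
    have E11 : HasDerivAt (fun x' => -(1 / 2) * 0 + 1 / 2 * deriv (fun x' => b1 x' y t) x')
        ((0:ℝ) + 1/2 * deriv (fun x' => deriv (fun x' => b1 x' y t) x') x) x :=
      (hasDerivAt_const x (-(1/2)*(0:ℝ))).add (hb2d.const_mul (1/2))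
    have E10y : HasDerivAt (fun y' => 1 / 4 + lam * m x y' t)
        ((0:ℝ) + lam * deriv (fun y' => m x y' t) y) y :=
      (hasDerivAt_const y ((1:ℝ)/4)).add (hmyd.const_mul lam)
    have E10x : HasDerivAt (fun x' =>
          -(1 / 2) * (1 / 4 + lam * m x' y t) +
            (lam * m x' y t * (b1 x' y t + 1 / 2) -
                  1 / 2 * deriv (fun x' => deriv (fun x' => b1 x' y t) x') x' +
                1 / 4 * (b1 x' y t + 1 / 2) -
              1 / 2 * m x' y t - 1 / (8 * lam)))
        (-(1/2) * ((0:ℝ) + lam * deriv (fun x' => m x' y t) x) +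
          (lam * deriv (fun x' => m x' y t) x * (b1 x y t + 1/2)
              + lam * m x y t * deriv (fun x' => b1 x' y t) x
            - 1/2 * deriv (fun x' => deriv (fun x' => deriv (fun x' => b1 x' y t) x') x') x
            + 1/4 * deriv (fun x' => b1 x' y t) x
            - 1/2 * deriv (fun x' => m x' y t) x)) x :=
      (((hasDerivAt_const x ((1:ℝ)/4)).add (hmd.const_mul lam)).const_mul (-(1/2))).add
        ((((((hmd.const_mul lam).mul (hb1d.add_const (1/2))).sub
          (hb3d.const_mul (1/2))).add
          ((hb1d.add_const (1/2)).const_mul (1/4))).sub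
          (hmd.const_mul (1/2))).sub_const (1/(8*lam)))
    apply Matrix.ext
    intro i j
    fin_cases i <;> fin_cases j
    · simp only [mdX3, mdY3, CHU3, CHVt3, dX3, Matrix.add_apply, Matrix.sub_apply,
        Matrix.smul_apply, Matrix.of_apply, Matrix.mul_apply, Fin.sum_univ_two, Matrix.zero_apply,
        Matrix.cons_val', Matrix.cons_val_zero, Matrix.cons_val_one, Matrix.head_cons,
        Matrix.empty_val', Matrix.cons_val_fin_one, Matrix.head_fin_const, smul_eq_mul,
        Fin.mk_zero, Fin.mk_one]
      rw [deriv_const, E00.deriv]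
      field_simp
      ring
    · simp only [mdX3, mdY3, CHU3, CHVt3, dX3, Matrix.add_apply, Matrix.sub_apply,
        Matrix.smul_apply, Matrix.of_apply, Matrix.mul_apply, Fin.sum_univ_two, Matrix.zero_apply,
        Matrix.cons_val', Matrix.cons_val_zero, Matrix.cons_val_one, Matrix.head_cons,
        Matrix.empty_val', Matrix.cons_val_fin_one, Matrix.head_fin_const, smul_eq_mul,
        Fin.mk_zero, Fin.mk_one]
      rw [deriv_const, E01.deriv]
      ring
    · simp only [mdX3, mdY3, CHU3, CHVt3, dX3, Matrix.add_apply, Matrix.sub_apply,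
        Matrix.smul_apply, Matrix.of_apply, Matrix.mul_apply, Fin.sum_univ_two, Matrix.zero_apply,
        Matrix.cons_val', Matrix.cons_val_zero, Matrix.cons_val_one, Matrix.head_cons,
        Matrix.empty_val', Matrix.cons_val_fin_one, Matrix.head_fin_const, smul_eq_mul,
        Fin.mk_zero, Fin.mk_one]
      rw [E10y.deriv, E10x.deriv]
      linear_combination lam * hy' + h1'
    · simp only [mdX3, mdY3, CHU3, CHVt3, dX3, Matrix.add_apply, Matrix.sub_apply,
        Matrix.smul_apply, Matrix.of_apply, Matrix.mul_apply, Fin.sum_univ_two, Matrix.zero_apply,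
        Matrix.cons_val', Matrix.cons_val_zero, Matrix.cons_val_one, Matrix.head_cons,
        Matrix.empty_val', Matrix.cons_val_fin_one, Matrix.head_fin_const, smul_eq_mul,
        Fin.mk_zero, Fin.mk_one]
      rw [deriv_const, E11.deriv]
      field_simp
      ring
  · intro x y t
    have hAc : ContDiff ℝ (⊤:ℕ∞) (fun x' => b1 x' y t) := sliceX_smooth hb1 y t
    have hA'c := smooth_deriv hAc
    have hA''c := smooth_deriv hA'c
    have hBc : ContDiff ℝ (⊤:ℕ∞) (fun x' => b2 x' y t) := sliceX_smooth hb2 y t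
    have hB'c := smooth_deriv hBc
    have hB''c := smooth_deriv hB'c
    have hMc : ContDiff ℝ (⊤:ℕ∞) (fun x' => m x' y t) := sliceX_smooth hm y t
    have hMtc : ContDiff ℝ (⊤:ℕ∞) (fun t' => m x y t') := sliceT_smooth hm x y
    have ha1d : HasDerivAt (fun x' => b1 x' y t) (deriv (fun x' => b1 x' y t) x) x :=
      smooth_hasDerivAt hAc x
    have ha2d : HasDerivAt (fun x' => deriv (fun x' => b1 x' y t) x')
        (deriv (fun x' => deriv (fun x' => b1 x' y t) x') x) x := smooth_hasDerivAt hA'c x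
    have ha3d : HasDerivAt (fun x' => deriv (fun x' => deriv (fun x' => b1 x' y t) x') x')
        (deriv (fun x' => deriv (fun x' => deriv (fun x' => b1 x' y t) x') x') x) x :=
      smooth_hasDerivAt hA''c x
    have hb1d : HasDerivAt (fun x' => b2 x' y t) (deriv (fun x' => b2 x' y t) x) x :=
      smooth_hasDerivAt hBc x
    have hb2d : HasDerivAt (fun x' => deriv (fun x' => b2 x' y t) x')
        (deriv (fun x' => deriv (fun x' => b2 x' y t) x') x) x := smooth_hasDerivAt hB'c x
    have hb3d : HasDerivAt (fun x' => deriv (fun x' => deriv (fun x' => b2 x' y t) x') x')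
        (deriv (fun x' => deriv (fun x' => deriv (fun x' => b2 x' y t) x') x') x) x :=
      smooth_hasDerivAt hB''c x
    have hmd : HasDerivAt (fun x' => m x' y t) (deriv (fun x' => m x' y t) x) x :=
      smooth_hasDerivAt hMc x
    have hmtd : HasDerivAt (fun t' => m x y t') (deriv (fun t' => m x y t') t) t :=
      smooth_hasDerivAt hMtc t
    have ht' := ht x y t
    have h1' := h1 x y t
    have h2' := h2 x y t
    simp only [dX3, dT3] at ht' h1' h2'
    have hproda : deriv (fun x' => m x' y t * b1 x' y t) x
        = deriv (fun x' => m x' y t) x * b1 x y t + m x y t * deriv (fun x' => b1 x' y t) x :=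
      (hmd.mul ha1d).deriv
    have hprodb : deriv (fun x' => m x' y t * b2 x' y t) x
        = deriv (fun x' => m x' y t) x * b2 x y t + m x y t * deriv (fun x' => b2 x' y t) x :=
      (hmd.mul hb1d).deriv
    rw [hprodb] at ht'
    rw [hproda] at h2'
    have hl : lam * lam⁻¹ = 1 := mul_inv_cancel₀ hlam
    have F00 : HasDerivAt (fun x' =>
          -(1 / 2) * 0 + -(1 / 2) * deriv (fun x' => b2 x' y t) x' +
            lam⁻¹ * (-(1 / 2) * deriv (fun x' => b1 x' y t) x'))
        ((0:ℝ) + -(1/2) * deriv (fun x' => deriv (fun x' => b2 x' y t) x') x +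
          lam⁻¹ * (-(1/2) * deriv (fun x' => deriv (fun x' => b1 x' y t) x') x)) x :=
      ((hasDerivAt_const x (-(1/2)*(0:ℝ))).add (hb2d.const_mul (-(1/2)))).add
        ((ha2d.const_mul (-(1/2))).const_mul lam⁻¹)
    have F01 : HasDerivAt (fun x' =>
          -(1 / 2) * 1 + (b2 x' y t + 1 / 2 - 1 / (2 * lam)) +
            lam⁻¹ * (b1 x' y t + 1 / 2 - 1 / (2 * lam)))
        ((0:ℝ) + deriv (fun x' => b2 x' y t) x + lam⁻¹ * deriv (fun x' => b1 x' y t) x) x :=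
      ((hasDerivAt_const x (-(1/2)*(1:ℝ))).add
        ((hb1d.add_const (1/2)).sub_const (1/(2*lam)))).add
        (((ha1d.add_const (1/2)).sub_const (1/(2*lam))).const_mul lam⁻¹)
    have F11 : HasDerivAt (fun x' =>
          -(1 / 2) * 0 + 1 / 2 * deriv (fun x' => b2 x' y t) x' +
            lam⁻¹ * (1 / 2 * deriv (fun x' => b1 x' y t) x'))
        ((0:ℝ) + 1/2 * deriv (fun x' => deriv (fun x' => b2 x' y t) x') x +
          lam⁻¹ * (1/2 * deriv (fun x' => deriv (fun x' => b1 x' y t) x') x)) x :=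
      ((hasDerivAt_const x (-(1/2)*(0:ℝ))).add (hb2d.const_mul (1/2))).add
        ((ha2d.const_mul (1/2)).const_mul lam⁻¹)
    have F10t : HasDerivAt (fun t' => 1 / 4 + lam * m x y t')
        ((0:ℝ) + lam * deriv (fun t' => m x y t') t) t :=
      (hasDerivAt_const t ((1:ℝ)/4)).add (hmtd.const_mul lam)
    have F10x : HasDerivAt (fun x' =>
          -(1 / 2) * (1 / 4 + lam * m x' y t) +
              (lam * m x' y t * (b2 x' y t + 1 / 2) -
                    1 / 2 * deriv (fun x' => deriv (fun x' => b2 x' y t) x') x' +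
                  1 / 4 * (b2 x' y t + 1 / 2) -
                1 / 2 * m x' y t - 1 / (8 * lam)) +
            lam⁻¹ *
              (lam * m x' y t * (b1 x' y t + 1 / 2) -
                    1 / 2 * deriv (fun x' => deriv (fun x' => b1 x' y t) x') x' +
                  1 / 4 * (b1 x' y t + 1 / 2) -
                1 / 2 * m x' y t - 1 / (8 * lam)))
        (-(1/2) * ((0:ℝ) + lam * deriv (fun x' => m x' y t) x) +
          (lam * deriv (fun x' => m x' y t) x * (b2 x y t + 1/2)
              + lam * m x y t * deriv (fun x' => b2 x' y t) x
            - 1/2 * deriv (fun x' => deriv (fun x' => deriv (fun x' => b2 x' y t) x') x') x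
            + 1/4 * deriv (fun x' => b2 x' y t) x
            - 1/2 * deriv (fun x' => m x' y t) x) +
          lam⁻¹ * (lam * deriv (fun x' => m x' y t) x * (b1 x y t + 1/2)
              + lam * m x y t * deriv (fun x' => b1 x' y t) x
            - 1/2 * deriv (fun x' => deriv (fun x' => deriv (fun x' => b1 x' y t) x') x') x
            + 1/4 * deriv (fun x' => b1 x' y t) x
            - 1/2 * deriv (fun x' => m x' y t) x)) x :=
      ((((hasDerivAt_const x ((1:ℝ)/4)).add (hmd.const_mul lam)).const_mul (-(1/2))).add
        ((((((hmd.const_mul lam).mul (hb1d.add_const (1/2))).sub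
          (hb3d.const_mul (1/2))).add
          ((hb1d.add_const (1/2)).const_mul (1/4))).sub
          (hmd.const_mul (1/2))).sub_const (1/(8*lam)))).add
        (((((((hmd.const_mul lam).mul (ha1d.add_const (1/2))).sub
          (ha3d.const_mul (1/2))).add
          ((ha1d.add_const (1/2)).const_mul (1/4))).sub
          (hmd.const_mul (1/2))).sub_const (1/(8*lam))).const_mul lam⁻¹)
    apply Matrix.ext
    intro i j
    fin_cases i <;> fin_cases j
    · simp only [mdX3, mdT3, CHU3, CHVt3, dX3, Matrix.add_apply, Matrix.sub_apply,
        Matrix.smul_apply, Matrix.of_apply, Matrix.mul_apply, Fin.sum_univ_two, Matrix.zero_apply,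
        Matrix.cons_val', Matrix.cons_val_zero, Matrix.cons_val_one, Matrix.head_cons,
        Matrix.empty_val', Matrix.cons_val_fin_one, Matrix.head_fin_const, smul_eq_mul,
        Fin.mk_zero, Fin.mk_one]
      rw [deriv_const, F00.deriv]
      linear_combination (m x y t * (1 + lam⁻¹) / 2) * hl
    · simp only [mdX3, mdT3, CHU3, CHVt3, dX3, Matrix.add_apply, Matrix.sub_apply,
        Matrix.smul_apply, Matrix.of_apply, Matrix.mul_apply, Fin.sum_univ_two, Matrix.zero_apply,
        Matrix.cons_val', Matrix.cons_val_zero, Matrix.cons_val_one, Matrix.head_cons,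
        Matrix.empty_val', Matrix.cons_val_fin_one, Matrix.head_fin_const, smul_eq_mul,
        Fin.mk_zero, Fin.mk_one]
      rw [deriv_const, F01.deriv]
      ring
    · simp only [mdX3, mdT3, CHU3, CHVt3, dX3, Matrix.add_apply, Matrix.sub_apply,
        Matrix.smul_apply, Matrix.of_apply, Matrix.mul_apply, Fin.sum_univ_two, Matrix.zero_apply,
        Matrix.cons_val', Matrix.cons_val_zero, Matrix.cons_val_one, Matrix.head_cons,
        Matrix.empty_val', Matrix.cons_val_fin_one, Matrix.head_fin_const, smul_eq_mul,
        Fin.mk_zero, Fin.mk_one]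
      rw [F10t.deriv, F10x.deriv]
      linear_combination lam * ht' + h2' + lam⁻¹ * h1'
        - (b1 x y t * deriv (fun x' => m x' y t) x
            + 2 * deriv (fun x' => b1 x' y t) x * m x y t
            + deriv (fun x' => m x' y t) x / 2) * hl
    · simp only [mdX3, mdT3, CHU3, CHVt3, dX3, Matrix.add_apply, Matrix.sub_apply,
        Matrix.smul_apply, Matrix.of_apply, Matrix.mul_apply, Fin.sum_univ_two, Matrix.zero_apply,
        Matrix.cons_val', Matrix.cons_val_zero, Matrix.cons_val_one, Matrix.head_cons,
        Matrix.empty_val', Matrix.cons_val_fin_one, Matrix.head_fin_const, smul_eq_mul,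
        Fin.mk_zero, Fin.mk_one]
      rw [deriv_const, F11.deriv]
      linear_combination (-(m x y t * (1 + lam⁻¹)) / 2) * hl
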